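/- arXiv:2504.18710 — 3 statements merged into one kernel-verified Lean document; each statement's English description precedes it below -/
import Mathlib

section
/- Given p ∈ ℝⁿ and a linearly independent family (vᵢ)_{i=1}^m in ℝⁿ with m ≤ n, there exist a surjective linear map W : ℝⁿ → ℝᵐ and b ∈ ℝᵐ such that for every x ∈ ℝⁿ decomposed as x = p + ṽ + Σᵢ aᵢ vᵢ with ṽ ∈ (span{v₁,…,v_m})^⊥, one has τ_{W,b}(x) = W⁺W p + Σ_{i : aᵢ > 0} aᵢ vᵢ. -/
/-
Let `V = span ℝ (range v)`. Take for `W` the map sending `x` to the coordinates, in the basis `v`,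
of its orthogonal projection onto `V`, and for `W⁺` the map `y ↦ ∑ yᵢ vᵢ`; these are mutually
pseudoinverse with `ker W = Vᗮ`. With `b = -W p`, a point `x = p + ṽ + ∑ aᵢ vᵢ` gives
`W x + b = a`, so the ReLU keeps exactly the positive coefficients and `W⁺` reassembles them.
-/

noncomputable section

/-- Componentwise ReLU. -/
def relu {m : ℕ} (y : EuclideanSpace ℝ (Fin m)) : EuclideanSpace ℝ (Fin m) :=
  WithLp.toLp 2 (fun i => max (y i) 0)

/-- Truncation map τ_{W,b}(x) = W⁺(σ(Wx + b) - b), with `Wp` playing the role of W⁺. -/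
def trunc {n m : ℕ} (W : EuclideanSpace ℝ (Fin n) →ₗ[ℝ] EuclideanSpace ℝ (Fin m))
    (Wp : EuclideanSpace ℝ (Fin m) →ₗ[ℝ] EuclideanSpace ℝ (Fin n))
    (b : EuclideanSpace ℝ (Fin m)) (x : EuclideanSpace ℝ (Fin n)) :
    EuclideanSpace ℝ (Fin n) :=
  Wp (relu (W x + b) - b)

open Submodule

section

variable {ι E : Type*} [Fintype ι] [NormedAddCommGroup E] [InnerProductSpace ℝ E]

def euclideanLinearCombination (v : ι → E) : EuclideanSpace ℝ ι →ₗ[ℝ] E :=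
  Fintype.linearCombination ℝ v ∘ₗ (WithLp.linearEquiv 2 ℝ (ι → ℝ)).toLinearMap

theorem euclideanLinearCombination_apply (v : ι → E) (y : EuclideanSpace ℝ ι) :
    euclideanLinearCombination v y = ∑ i, y i • v i :=
  Fintype.linearCombination_apply ℝ v y

-- Supplies the `HasOrthogonalProjection` instance for the span.
instance finiteDimensional_span_range (v : ι → E) :
    FiniteDimensional ℝ (span ℝ (Set.range v)) :=
  FiniteDimensional.span_of_finite ℝ (Set.finite_range v)

namespace LinearIndependent

variable {v : ι → E} (hv : LinearIndependent ℝ v)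

def spanCoords : E →ₗ[ℝ] EuclideanSpace ℝ ι :=
  (WithLp.linearEquiv 2 ℝ (ι → ℝ)).symm.toLinearMap ∘ₗ (Module.Basis.span hv).equivFun.toLinearMap
    ∘ₗ (span ℝ (Set.range v)).orthogonalProjectionOnto.toLinearMap

theorem spanCoords_sum_smul (a : ι → ℝ) : hv.spanCoords (∑ i, a i • v i) = WithLp.toLp 2 a := by
  have hsum : (((Module.Basis.span hv).equivFun.symm a : span ℝ (Set.range v)) : E) =
      ∑ i, a i • v i := by
    simp [Module.Basis.equivFun_symm_apply, Module.Basis.span_apply]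
  simp only [spanCoords, ← hsum, LinearMap.coe_comp, Function.comp_apply,
    ContinuousLinearMap.coe_coe, orthogonalProjectionOnto_mem_subspace_eq_self,
    LinearEquiv.coe_coe, LinearEquiv.apply_symm_apply]
  rfl

theorem spanCoords_euclideanLinearCombination (y : EuclideanSpace ℝ ι) :
    hv.spanCoords (euclideanLinearCombination v y) = y := by
  rw [euclideanLinearCombination_apply, spanCoords_sum_smul]

theorem euclideanLinearCombination_spanCoords (x : E) :
    euclideanLinearCombination v (hv.spanCoords x) =
      ((span ℝ (Set.range v)).orthogonalProjectionOnto x : E) := by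
  conv_rhs =>
    rw [← (Module.Basis.span hv).sum_equivFun ((span ℝ (Set.range v)).orthogonalProjectionOnto x)]
  simp [euclideanLinearCombination_apply, spanCoords, Module.Basis.span_apply]

theorem ker_spanCoords : LinearMap.ker hv.spanCoords = (span ℝ (Set.range v))ᗮ := by
  ext x
  simp [spanCoords]

theorem orthogonal_ker_spanCoords : (LinearMap.ker hv.spanCoords)ᗮ = span ℝ (Set.range v) := by
  rw [ker_spanCoords, orthogonal_orthogonal]

theorem euclideanLinearCombination_spanCoords_eq_orthogonalProjectionOnto [CompleteSpace E]
    (x : E) :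
    euclideanLinearCombination v (hv.spanCoords x) =
      ((LinearMap.ker hv.spanCoords)ᗮ.orthogonalProjectionOnto x : E) := by
  refine (eq_starProjection_of_mem_orthogonal ?_ ?_).symm <;>
    rw [orthogonal_ker_spanCoords, euclideanLinearCombination_spanCoords]
  · exact coe_mem _
  · exact sub_starProjection_mem_orthogonal x

end LinearIndependent

end

theorem sum_max_zero_smul {ι M : Type*} [Fintype ι] [AddCommMonoid M] [Module ℝ M]
    (a : ι → ℝ) (v : ι → M) :
    ∑ i, max (a i) 0 • v i = ∑ i ∈ Finset.univ.filter (fun i => 0 < a i), a i • v i := by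
  rw [Finset.sum_filter]
  refine Finset.sum_congr rfl fun i _ => ?_
  split_ifs with h
  · rw [max_eq_left h.le]
  · rw [max_eq_right (not_lt.mp h), zero_smul]

theorem trunc_neg_map_apply_of_map_eq {n m : ℕ}
    {W : EuclideanSpace ℝ (Fin n) →ₗ[ℝ] EuclideanSpace ℝ (Fin m)}
    (Wp : EuclideanSpace ℝ (Fin m) →ₗ[ℝ] EuclideanSpace ℝ (Fin n)) {p x : EuclideanSpace ℝ (Fin n)}
    {a : Fin m → ℝ} (h : W x = W p + WithLp.toLp 2 a) :
    trunc W Wp (-W p) x = Wp (W p) + Wp (WithLp.toLp 2 fun i => max (a i) 0) := by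
  rw [trunc, h, add_neg_cancel_comm, sub_neg_eq_add, map_add, add_comm]
  rfl

theorem exists_trunc_of_cone_general {n m : ℕ}
    (p : EuclideanSpace ℝ (Fin n)) (v : Fin m → EuclideanSpace ℝ (Fin n))
    (hv : LinearIndependent ℝ v) :
    ∃ (W : EuclideanSpace ℝ (Fin n) →ₗ[ℝ] EuclideanSpace ℝ (Fin m))
      (Wp : EuclideanSpace ℝ (Fin m) →ₗ[ℝ] EuclideanSpace ℝ (Fin n))
      (b : EuclideanSpace ℝ (Fin m)),
      Function.Surjective W ∧
      -- Wp is the Moore–Penrose pseudoinverse of W: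
      (∀ y, W (Wp y) = y) ∧
      (∀ x, Wp (W x) =
        (Submodule.orthogonalProjection (LinearMap.ker W)ᗮ x : EuclideanSpace ℝ (Fin n))) ∧
      ∀ (x vt : EuclideanSpace ℝ (Fin n)) (a : Fin m → ℝ),
        vt ∈ (Submodule.span ℝ (Set.range v))ᗮ →
        x = p + vt + ∑ i, a i • v i →
        trunc W Wp b x =
          Wp (W p) + ∑ i ∈ Finset.univ.filter (fun i => 0 < a i), a i • v i := by
  refine ⟨hv.spanCoords, euclideanLinearCombination v, -hv.spanCoords p,
    fun y => ⟨_, hv.spanCoords_euclideanLinearCombination y⟩,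
    hv.spanCoords_euclideanLinearCombination,
    hv.euclideanLinearCombination_spanCoords_eq_orthogonalProjectionOnto, ?_⟩
  rintro x vt a hvt rfl
  have hvt_ker : hv.spanCoords vt = 0 := by rwa [← LinearMap.mem_ker, hv.ker_spanCoords]
  have hW : hv.spanCoords (p + vt + ∑ i, a i • v i) = hv.spanCoords p + WithLp.toLp 2 a := by
    rw [map_add, map_add, hvt_ker, add_zero, hv.spanCoords_sum_smul]
  rw [trunc_neg_map_apply_of_map_eq _ hW,
    euclideanLinearCombination_apply v (WithLp.toLp 2 fun i => max (a i) 0), sum_max_zero_smul]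

/-- converse direction of the Lemma — realizing a prescribed cone. -/
theorem exists_trunc_of_cone {n m : ℕ} (hmn : m ≤ n)
    (p : EuclideanSpace ℝ (Fin n)) (v : Fin m → EuclideanSpace ℝ (Fin n))
    (hv : LinearIndependent ℝ v) :
    ∃ (W : EuclideanSpace ℝ (Fin n) →ₗ[ℝ] EuclideanSpace ℝ (Fin m))
      (Wp : EuclideanSpace ℝ (Fin m) →ₗ[ℝ] EuclideanSpace ℝ (Fin n))
      (b : EuclideanSpace ℝ (Fin m)),
      Function.Surjective W ∧
      -- Wp is the Moore–Penrose pseudoinverse of W: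
      (∀ y, W (Wp y) = y) ∧
      (∀ x, Wp (W x) =
        (Submodule.orthogonalProjection (LinearMap.ker W)ᗮ x : EuclideanSpace ℝ (Fin n))) ∧
      ∀ (x vt : EuclideanSpace ℝ (Fin n)) (a : Fin m → ℝ),
        vt ∈ (Submodule.span ℝ (Set.range v))ᗮ →
        x = p + vt + ∑ i, a i • v i →
        trunc W Wp b x =
          Wp (W p) + ∑ i ∈ Finset.univ.filter (fun i => 0 < a i), a i • v i :=
  exists_trunc_of_cone_general p v hv
end
end

section
/- Let W : ℝⁿ → ℝᵐ be surjective, b = -Wp, vᵢ = W⁺(eᵢ). If two points x₁, x₂ ∈ ℝⁿ with coordinate decompositions xₖ = p + x̃ₖ + Σᵢ aᵢ(xₖ) vᵢ (x̃ₖ ∈ ker W) satisfy max(aᵢ(x₁), 0) = max(aᵢ(x₂), 0) for all i = 1,…,m, then τ_{W,b}(x₁) = τ_{W,b}(x₂). -/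
noncomputable section

/-! The coordinates `aᵢ` of `x` are exactly the entries of the preactivation `W x + b`, since
`W` kills `ker W`, sends `vᵢ = W⁺ eᵢ` to `eᵢ`, and `b = -W p` cancels `W p`. The ReLU then only
sees `max(aᵢ, 0)`. -/

theorem EuclideanSpace.sum_smul_single_one {ι : Type*} [Fintype ι] [DecidableEq ι]
    (a : ι → ℝ) : ∑ i, a i • EuclideanSpace.single i (1 : ℝ) = WithLp.toLp 2 a := by
  simpa [EuclideanSpace.basisFun_apply] using
    (EuclideanSpace.basisFun ι ℝ).sum_repr (WithLp.toLp 2 a)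

theorem map_add_ker_add_sum_smul_of_rightInverse {E ι : Type*} [AddCommGroup E] [Module ℝ E]
    [Fintype ι] [DecidableEq ι] (W : E →ₗ[ℝ] EuclideanSpace ℝ ι)
    (Wp : EuclideanSpace ℝ ι →ₗ[ℝ] E) (hWWp : ∀ y, W (Wp y) = y)
    (p xt : E) (hxt : xt ∈ LinearMap.ker W) (a : ι → ℝ) :
    W (p + xt + ∑ i, a i • Wp (EuclideanSpace.single i 1)) = W p + WithLp.toLp 2 a := by
  simp only [map_add, map_sum, map_smul, hWWp, LinearMap.mem_ker.mp hxt, add_zero,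
    EuclideanSpace.sum_smul_single_one]

theorem relu_toLp {m : ℕ} (a : Fin m → ℝ) :
    relu (WithLp.toLp 2 a) = WithLp.toLp 2 (fun i => max (a i) 0) :=
  rfl

theorem trunc_eq_of_relu_eq {n m : ℕ}
    (W : EuclideanSpace ℝ (Fin n) →ₗ[ℝ] EuclideanSpace ℝ (Fin m))
    (Wp : EuclideanSpace ℝ (Fin m) →ₗ[ℝ] EuclideanSpace ℝ (Fin n))
    (b : EuclideanSpace ℝ (Fin m)) {x₁ x₂ : EuclideanSpace ℝ (Fin n)}
    (h : relu (W x₁ + b) = relu (W x₂ + b)) :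
    trunc W Wp b x₁ = trunc W Wp b x₂ := by
  rw [trunc, trunc, h]

theorem trunc_eq_of_posParts_eq_general {n m : ℕ}
    (W : EuclideanSpace ℝ (Fin n) →ₗ[ℝ] EuclideanSpace ℝ (Fin m))
    (Wp : EuclideanSpace ℝ (Fin m) →ₗ[ℝ] EuclideanSpace ℝ (Fin n))
    (hWWp : ∀ y, W (Wp y) = y)
    (p : EuclideanSpace ℝ (Fin n)) (b : EuclideanSpace ℝ (Fin m)) (hb : b = -(W p))
    (v : Fin m → EuclideanSpace ℝ (Fin n))
    (hv : ∀ i, v i = Wp (EuclideanSpace.single i (1 : ℝ)))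
    (x₁ x₂ xt₁ xt₂ : EuclideanSpace ℝ (Fin n))
    (hxt₁ : xt₁ ∈ LinearMap.ker W) (hxt₂ : xt₂ ∈ LinearMap.ker W)
    (a₁ a₂ : Fin m → ℝ)
    (hx₁ : x₁ = p + xt₁ + ∑ i, a₁ i • v i)
    (hx₂ : x₂ = p + xt₂ + ∑ i, a₂ i • v i)
    (hpos : ∀ i, max (a₁ i) 0 = max (a₂ i) 0) :
    trunc W Wp b x₁ = trunc W Wp b x₂ := by
  have preact_eq : ∀ xt ∈ LinearMap.ker W, ∀ a : Fin m → ℝ,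
      W (p + xt + ∑ i, a i • v i) + b = WithLp.toLp 2 a := by
    intro xt hxt a
    simp only [hv, map_add_ker_add_sum_smul_of_rightInverse W Wp hWWp p xt hxt, hb,
      add_neg_cancel_comm]
  apply trunc_eq_of_relu_eq
  rw [hx₁, hx₂, preact_eq xt₁ hxt₁, preact_eq xt₂ hxt₂, relu_toLp, relu_toLp]
  simp only [hpos]

/-- points with the same positive parts of coordinates truncate to the
same point. -/
theorem trunc_eq_of_posParts_eq {n m : ℕ}
    (W : EuclideanSpace ℝ (Fin n) →ₗ[ℝ] EuclideanSpace ℝ (Fin m))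
    (hW : Function.Surjective W)
    (Wp : EuclideanSpace ℝ (Fin m) →ₗ[ℝ] EuclideanSpace ℝ (Fin n))
    (hWWp : ∀ y, W (Wp y) = y)
    (hproj : ∀ x, Wp (W x) =
      (Submodule.orthogonalProjectionOnto (LinearMap.ker W)ᗮ x : EuclideanSpace ℝ (Fin n)))
    (p : EuclideanSpace ℝ (Fin n)) (b : EuclideanSpace ℝ (Fin m)) (hb : b = -(W p))
    (v : Fin m → EuclideanSpace ℝ (Fin n))
    (hv : ∀ i, v i = Wp (EuclideanSpace.single i (1 : ℝ)))
    (x₁ x₂ xt₁ xt₂ : EuclideanSpace ℝ (Fin n))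
    (hxt₁ : xt₁ ∈ LinearMap.ker W) (hxt₂ : xt₂ ∈ LinearMap.ker W)
    (a₁ a₂ : Fin m → ℝ)
    (hx₁ : x₁ = p + xt₁ + ∑ i, a₁ i • v i)
    (hx₂ : x₂ = p + xt₂ + ∑ i, a₂ i • v i)
    (hpos : ∀ i, max (a₁ i) 0 = max (a₂ i) 0) :
    trunc W Wp b x₁ = trunc W Wp b x₂ :=
  trunc_eq_of_posParts_eq_general W Wp hWWp p b hb v hv x₁ x₂ xt₁ xt₂ hxt₁ hxt₂ a₁ a₂ hx₁ hx₂ hpos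
end
end

section
/- Let S ⊂ ℝⁿ be an n-simplex with vertices s₁,…,s_{n+1} contained in an affine hyperplane H' of ℝ^{n+1} (after the standard inclusion ι : ℝⁿ ↪ ℝ^{n+1}), and let p ∈ ℝ^{n+1} be a point not in the affine span of ι(S). Define vᵢ = p − ι(sᵢ) for i = 1,…,n+1. Then the vectors v₁,…,v_{n+1} are linearly independent, ι(S) ⊆ 𝒮₋(p, v) = {p + Σᵢ aᵢ vᵢ : all aᵢ ≤ 0}, and 𝒮₋(p, v) ∩ affineSpan(ι(S)) = ι(S). -/
/-!
Since `p` lies off the affine span of the affinely independent points `uᵢ = ι sᵢ`, the family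
`p, u₁, …, u_{n+1}` is still affinely independent, and everything follows from this. A linear
relation `∑ cᵢ (p - uᵢ) = 0` is an affine relation among `p` and the `uᵢ`, hence trivial. A point
`p + ∑ aᵢ (p - uᵢ)` of the cone lying in the span equals some `∑ wᵢ uᵢ` with `∑ wᵢ = 1`, and
uniqueness of the coefficients forces `wᵢ = -aᵢ ≥ 0`, so it lies in `ι S`.
-/

noncomputable section

/-- The standard inclusion ι : ℝⁿ → ℝᵐ sending eᵢⁿ to eᵢᵐ (padding with zeros). -/
def incl (n m : ℕ) : EuclideanSpace ℝ (Fin n) →ₗ[ℝ] EuclideanSpace ℝ (Fin m) where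
  toFun x := WithLp.toLp 2 (fun i => if h : (i : ℕ) < n then x ⟨i, h⟩ else 0)
  map_add' x y := by ext i; by_cases h : (i : ℕ) < n <;> simp [h]
  map_smul' c x := by ext i; by_cases h : (i : ℕ) < n <;> simp [h]

open Set Finset

section

variable {k V ι : Type*} [Field k] [AddCommGroup V] [Module k V] [Fintype ι]

theorem mem_affineSpan_range_iff_exists_sum {u : ι → V} {x : V} :
    x ∈ affineSpan k (range u) ↔ ∃ w : ι → k, ∑ i, w i = 1 ∧ x = ∑ i, w i • u i := by
  constructor
  · intro hx
    obtain ⟨w, hw, rfl⟩ := eq_affineCombination_of_mem_affineSpan_of_fintype hx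
    exact ⟨w, hw, univ.affineCombination_eq_linear_combination u w hw⟩
  · rintro ⟨w, hw, rfl⟩
    rw [← univ.affineCombination_eq_linear_combination u w hw]
    exact affineCombination_mem_affineSpan hw u

theorem sum_smul_sub_eq (p : V) (u : ι → V) (c : ι → k) :
    ∑ i, c i • (p - u i) = (∑ i, c i) • p - ∑ i, c i • u i := by
  simp only [smul_sub, sum_sub_distrib, sum_smul]

/-- That is, the family `u` extended by `p` is still affinely independent. -/
theorem AffineIndependent.eq_zero_of_smul_add_sum_eq_zero {u : ι → V} {p : V}
    (hu : AffineIndependent k u) (hp : p ∉ affineSpan k (range u)) {t : k} {c : ι → k}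
    (hsum : t + ∑ i, c i = 0) (h : t • p + ∑ i, c i • u i = 0) : t = 0 ∧ ∀ i, c i = 0 := by
  obtain rfl : t = 0 := by
    by_contra ht
    refine hp (mem_affineSpan_range_iff_exists_sum.2 ⟨fun i => -t⁻¹ * c i, ?_, ?_⟩)
    · rw [← mul_sum, show ∑ i, c i = -t by linear_combination hsum]
      field_simp
    · simp only [mul_smul, ← smul_sum]
      rw [eq_neg_of_add_eq_zero_right h, smul_neg, neg_smul, neg_neg, smul_smul,
        inv_mul_cancel₀ ht, one_smul]
  rw [zero_add] at hsum
  rw [zero_smul, zero_add] at h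
  exact ⟨rfl, fun i => hu.eq_zero_of_sum_eq_zero hsum h i (mem_univ i)⟩

theorem AffineIndependent.linearIndependent_sub_of_notMem_affineSpan {u : ι → V} {p : V}
    (hu : AffineIndependent k u) (hp : p ∉ affineSpan k (range u)) :
    LinearIndependent k fun i => p - u i := by
  rw [Fintype.linearIndependent_iff]
  intro c hc i
  rw [sum_smul_sub_eq, sub_eq_add_neg, ← sum_neg_distrib] at hc
  have hnull := hu.eq_zero_of_smul_add_sum_eq_zero hp (t := ∑ i, c i) (c := fun i => -c i) (by simp)
    (by simpa only [neg_smul] using hc)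
  simpa using hnull.2 i

variable [LinearOrder k] [IsOrderedRing k]

variable (k) in
/-- The cone `𝒮₋(p, v)` with apex `p` and edge directions `-vᵢ`. -/
def negCone (p : V) (v : ι → V) : Set V :=
  {y | ∃ a : ι → k, (∀ i, a i ≤ 0) ∧ y = p + ∑ i, a i • v i}

theorem convex_negCone (p : V) (v : ι → V) : Convex k (negCone k p v) := by
  rintro _ ⟨a, ha, rfl⟩ _ ⟨b, hb, rfl⟩ s t hs ht hst
  refine ⟨s • a + t • b, fun i => ?_, ?_⟩
  · exact add_nonpos (mul_nonpos_of_nonneg_of_nonpos hs (ha i))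
      (mul_nonpos_of_nonneg_of_nonpos ht (hb i))
  · simp only [Pi.add_apply, Pi.smul_apply, smul_eq_mul, add_smul, mul_smul, sum_add_distrib,
      ← smul_sum]
    linear_combination (norm := module) hst • p

theorem convexHull_subset_negCone (p : V) (u : ι → V) :
    convexHull k (range u) ⊆ negCone k p fun i => p - u i := by
  classical
  refine convexHull_min (range_subset_iff.2 fun i => ⟨-Pi.single i 1, fun j => ?_, ?_⟩)
    (convex_negCone p _)
  · by_cases h : j = i <;> simp [h]
  · simp [Pi.single_apply, ite_smul]

theorem AffineIndependent.negCone_inter_affineSpan {u : ι → V} {p : V}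
    (hu : AffineIndependent k u) (hp : p ∉ affineSpan k (range u)) :
    negCone k p (fun i => p - u i) ∩ affineSpan k (range u) = convexHull k (range u) := by
  refine Subset.antisymm ?_ fun y hy =>
    ⟨convexHull_subset_negCone p u hy, convexHull_subset_affineSpan _ hy⟩
  rintro _ ⟨⟨a, ha, rfl⟩, hy⟩
  obtain ⟨w, hw, hyw⟩ := mem_affineSpan_range_iff_exists_sum.1 hy
  -- comparing the two expressions of `y` gives a null combination of `p` and the `u i`
  have hwa : ∀ i, w i = -a i := by
    have hnull := hu.eq_zero_of_smul_add_sum_eq_zero hp (t := 1 + ∑ i, a i)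
      (c := fun i => -a i - w i) (by simp only [sum_sub_distrib, sum_neg_distrib, hw]; ring)
      (by
        rw [sum_smul_sub_eq] at hyw
        simp only [sub_smul, neg_smul, sum_sub_distrib, sum_neg_distrib]
        linear_combination (norm := module) hyw)
    exact fun i => by linear_combination -(hnull.2 i)
  refine mem_convexHull_of_exists_fintype w u (fun i => ?_) hw (mem_range_self ·) hyw.symm
  linarith [ha i, hwa i]

end

theorem incl_injective {n m : ℕ} (h : n ≤ m) : Function.Injective (incl n m) := by
  intro x y hxy
  ext i
  simpa [incl, i.isLt] using congrArg (· ⟨i, i.isLt.trans_le h⟩) hxy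

/-- cone over an included simplex. -/
theorem cone_over_simplex {n : ℕ}
    (s : Fin (n + 1) → EuclideanSpace ℝ (Fin n))
    (hs : AffineIndependent ℝ s)
    (S : Set (EuclideanSpace ℝ (Fin n)))
    (hS : S = convexHull ℝ (Set.range s))
    (p : EuclideanSpace ℝ (Fin (n + 1)))
    (hp : p ∉ affineSpan ℝ ((incl n (n + 1)) '' S))
    (v : Fin (n + 1) → EuclideanSpace ℝ (Fin (n + 1)))
    (hv : ∀ i, v i = p - incl n (n + 1) (s i))
    (Sminus : Set (EuclideanSpace ℝ (Fin (n + 1))))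
    (hSm : Sminus = {y | ∃ a : Fin (n + 1) → ℝ,
      (∀ i, a i ≤ 0) ∧ y = p + ∑ i, a i • v i}) :
    LinearIndependent ℝ v ∧
    (incl n (n + 1)) '' S ⊆ Sminus ∧
    Sminus ∩ (affineSpan ℝ ((incl n (n + 1)) '' S) : Set (EuclideanSpace ℝ (Fin (n + 1))))
      = (incl n (n + 1)) '' S := by
  subst hS hSm
  obtain rfl : v = fun i => p - incl n (n + 1) (s i) := funext hv
  have hu : AffineIndependent ℝ (incl n (n + 1) ∘ s) :=
    hs.map' (incl n (n + 1)).toAffineMap (incl_injective n.le_succ)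
  rw [LinearMap.image_convexHull, ← range_comp, affineSpan_convexHull] at hp ⊢
  exact ⟨hu.linearIndependent_sub_of_notMem_affineSpan hp, convexHull_subset_negCone p _,
    hu.negCone_inter_affineSpan hp⟩
end
end
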